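/- Let d ≥ 1, s ∈ (0,1), p ∈ (1,∞), R₀ ∈ (0,1), k ∈ ℕ, and let u ∈ L^{p−1}_{sp}(ℝ^d) be continuous on B_{R₀}(0) and vanish to infinite order at 0 (for every n ∈ ℕ, u(x) = O(|x|^n) as |x| → 0). For ε > 0 and x ∈ ℝ^d define W_{2,1}(x,ε) := ∫_{B_{(k+1)ε}(0)^c} [J_p(u(x)−u(y)) + J_p(u(y))] |x−y|^{−d−sp} dy. Then for every m ∈ ℕ there exist C > 0 and ε₁ > 0 such that sup_{x ∈ B_{kε}(0)} |W_{2,1}(x,ε)| ≤ C ε^m for all ε ∈ (0,ε₁). -/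
import Mathlib


open MeasureTheory Filter Asymptotics Metric Set NNReal ENNReal

noncomputable section

/-- Euclidean space `ℝ^d`. -/
abbrev Ed (d : ℕ) := EuclideanSpace ℝ (Fin d)

/-- `J_p(t) = |t|^{p-2} t`. -/
def Jp (p t : ℝ) : ℝ := |t| ^ (p - 2) * t

/-- The principal value defining the fractional `p`-Laplacian of `u` at `x` exists and
equals `L`. -/
def fracPLapAt (d : ℕ) (s p : ℝ) (u : Ed d → ℝ) (x : Ed d) (L : ℝ) : Prop :=
  Tendsto (fun δ : ℝ =>
      ∫ y in {y : Ed d | δ < ‖x - y‖}, Jp p (u x - u y) / ‖x - y‖ ^ ((d : ℝ) + s * p))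
    (nhdsWithin 0 (Ioi 0)) (nhds L)

/-- Membership in the tail space `L^{p-1}_{sp}(ℝ^d)`. -/
def memTail (d : ℕ) (s p : ℝ) (u : Ed d → ℝ) : Prop :=
  Measurable u ∧
    Integrable (fun x : Ed d => |u x| ^ (p - 1) / (1 + ‖x‖) ^ ((d : ℝ) + s * p))

/-- The moments `m_{i,k} = ∫ x_i^{2k} |x|^{-4k} |u(x)|^{p-1} |x|^{-d-sp} dx ∈ [0,∞]`. -/
def mik (d : ℕ) (s p : ℝ) (u : Ed d → ℝ) (i : Fin d) (k : ℕ) : ℝ≥0∞ :=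
  ∫⁻ x : Ed d, ENNReal.ofReal
    ((x i ^ (2 * k) / ‖x‖ ^ (4 * k)) * (|u x| ^ (p - 1) / ‖x‖ ^ ((d : ℝ) + s * p)))

/-- The Carleman-type condition: for every `i` the series `∑_{k≥1} m_{i,k}^{-1/(2k)}`
diverges to `+∞` (with conventions `1/0 = ∞`, `1/∞ = 0`). -/
def carleman (d : ℕ) (s p : ℝ) (u : Ed d → ℝ) : Prop :=
  ∀ i : Fin d, ∑' k : ℕ, (mik d s p u i (k + 1) ^ ((1 : ℝ) / (2 * ((k : ℝ) + 1))))⁻¹ = ⊤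

lemma Jp_neg (p t : ℝ) : Jp p (-t) = - Jp p t := by
  simp [Jp, abs_neg]

lemma Jp_of_nonneg {p t : ℝ} (hp : 1 < p) (ht : 0 ≤ t) : Jp p t = t ^ (p - 1) := by
  rcases eq_or_lt_of_le ht with h | h
  · simp [Jp, ← h, Real.zero_rpow (by linarith : p - 1 ≠ 0)]
  · rw [Jp, abs_of_pos h, ← Real.rpow_add_one h.ne']
    ring_nf

lemma Jp_of_nonpos {p t : ℝ} (hp : 1 < p) (ht : t ≤ 0) : Jp p t = -((-t) ^ (p - 1)) := by
  have h := Jp_neg p t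
  rw [Jp_of_nonneg hp (neg_nonneg.2 ht)] at h
  linarith

lemma rpow_sub_le {α x y : ℝ} (hα : 0 < α) (hα1 : α ≤ 1) (hy : 0 ≤ y) (hxy : y ≤ x) :
    x ^ α - y ^ α ≤ (x - y) ^ α := by
  have h := NNReal.rpow_add_le_add_rpow (Real.toNNReal (x - y)) (Real.toNNReal y) hα.le hα1
  have hco : ((Real.toNNReal (x - y) + Real.toNNReal y : ℝ≥0) : ℝ) = x := by
    push_cast [Real.coe_toNNReal _ (by linarith : (0:ℝ) ≤ x - y), Real.coe_toNNReal _ hy]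
    ring
  have h2 : (((Real.toNNReal (x - y) + Real.toNNReal y) ^ α : ℝ≥0) : ℝ)
      ≤ ((Real.toNNReal (x - y) ^ α + Real.toNNReal y ^ α : ℝ≥0) : ℝ) := by
    exact_mod_cast h
  rw [NNReal.coe_rpow, hco] at h2
  push_cast [NNReal.coe_rpow, Real.coe_toNNReal _ (by linarith : (0:ℝ) ≤ x - y),
    Real.coe_toNNReal _ hy] at h2
  linarith

lemma Jp_main_le2 {p : ℝ} (hp : 1 < p) (hp2 : p ≤ 2) :
    ∀ x y : ℝ, y ≤ x →
      0 ≤ Jp p x - Jp p y ∧ Jp p x - Jp p y ≤ 2 * (x - y) ^ (p - 1) := by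
  have hα : 0 < p - 1 := by linarith
  have hα1 : p - 1 ≤ 1 := by linarith
  intro x y hxy
  rcases le_or_gt 0 y with hy | hy
  · rw [Jp_of_nonneg hp (hy.trans hxy), Jp_of_nonneg hp hy]
    have h0 : y ^ (p-1) ≤ x ^ (p-1) := Real.rpow_le_rpow hy hxy hα.le
    have h1 := rpow_sub_le hα hα1 hy hxy
    have h2 : (0:ℝ) ≤ (x - y) ^ (p - 1) := Real.rpow_nonneg (by linarith) _
    constructor <;> linarith
  · rcases le_or_gt 0 x with hx | hx
    · have hJy : Jp p y = -((-y) ^ (p - 1)) := Jp_of_nonpos hp (by linarith)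
      rw [Jp_of_nonneg hp hx, hJy]
      have h0 : (0:ℝ) ≤ x ^ (p-1) := Real.rpow_nonneg hx _
      have h0' : (0:ℝ) ≤ (-y) ^ (p-1) := Real.rpow_nonneg (by linarith) _
      have h1 : x ^ (p-1) ≤ (x - y) ^ (p-1) :=
        Real.rpow_le_rpow hx (by linarith) hα.le
      have h2 : (-y) ^ (p-1) ≤ (x - y) ^ (p-1) :=
        Real.rpow_le_rpow (by linarith) (by linarith) hα.le
      constructor <;> linarith
    · have hJx : Jp p x = -((-x) ^ (p - 1)) := Jp_of_nonpos hp (by linarith)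
      have hJy : Jp p y = -((-y) ^ (p - 1)) := Jp_of_nonpos hp (by linarith)
      rw [hJx, hJy]
      have h0 : (-x) ^ (p-1) ≤ (-y) ^ (p-1) :=
        Real.rpow_le_rpow (by linarith) (by linarith) hα.le
      have h1 := rpow_sub_le hα hα1 (by linarith : (0:ℝ) ≤ -x) (by linarith : -x ≤ -y)
      have h2 : (0:ℝ) ≤ (-y - -x) ^ (p - 1) := Real.rpow_nonneg (by linarith) _
      have h3 : -y - -x = x - y := by ring
      rw [h3] at h1 h2
      constructor <;> linarith

lemma Jp_holder {p x y : ℝ} (hp : 1 < p) (hp2 : p ≤ 2) :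
    |Jp p x - Jp p y| ≤ 2 * |x - y| ^ (p - 1) := by
  rcases le_total y x with h | h
  · obtain ⟨h0, h1⟩ := Jp_main_le2 hp hp2 x y h
    rw [abs_of_nonneg h0, abs_of_nonneg (by linarith : (0:ℝ) ≤ x - y)]
    exact h1
  · obtain ⟨h0, h1⟩ := Jp_main_le2 hp hp2 y x h
    rw [abs_sub_comm, abs_of_nonneg h0, abs_sub_comm x y,
      abs_of_nonneg (by linarith : (0:ℝ) ≤ y - x)]
    exact h1

-- MVT for rpow on [0, M], exponent α ≥ 1
lemma rpow_lip {α M x y : ℝ} (hα : 1 ≤ α) (hM : 0 ≤ M) (hy : 0 ≤ y) (hxy : y ≤ x)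
    (hxM : x ≤ M) : x ^ α - y ^ α ≤ α * M ^ (α - 1) * (x - y) := by
  have key : ∀ t ∈ Icc (0:ℝ) M, HasDerivWithinAt (fun t : ℝ => t ^ α)
      (α * t ^ (α - 1)) (Icc (0:ℝ) M) t := fun t _ =>
    (Real.hasDerivAt_rpow_const (Or.inr hα)).hasDerivWithinAt
  have hb : ∀ t ∈ Icc (0:ℝ) M, ‖α * t ^ (α - 1)‖ ≤ α * M ^ (α - 1) := by
    intro t ht
    rw [Real.norm_eq_abs,
      abs_of_nonneg (mul_nonneg (by linarith) (Real.rpow_nonneg ht.1 _))]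
    exact mul_le_mul_of_nonneg_left
      (Real.rpow_le_rpow ht.1 ht.2 (by linarith)) (by linarith)
  have := (convex_Icc (0:ℝ) M).norm_image_sub_le_of_norm_hasDerivWithin_le key hb
    (⟨hy, hxy.trans hxM⟩ : y ∈ Icc (0:ℝ) M) (⟨hy.trans hxy, hxM⟩ : x ∈ Icc (0:ℝ) M)
  rw [Real.norm_eq_abs, Real.norm_eq_abs, abs_of_nonneg (by linarith : (0:ℝ) ≤ x - y)] at this
  calc x ^ α - y ^ α ≤ |x ^ α - y ^ α| := le_abs_self _
    _ ≤ α * M ^ (α - 1) * (x - y) := this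

lemma Jp_main_ge2 {p M : ℝ} (hp2 : 2 ≤ p) (hM : 0 ≤ M) :
    ∀ x y : ℝ, |x| ≤ M → |y| ≤ M → y ≤ x →
      0 ≤ Jp p x - Jp p y ∧ Jp p x - Jp p y ≤ (p - 1) * M ^ (p - 2) * (x - y) := by
  have hp : 1 < p := by linarith
  have hα : 1 ≤ p - 1 := by linarith
  intro x y hxM hyM hxy
  rcases le_or_gt 0 y with hy | hy
  · rw [Jp_of_nonneg hp (hy.trans hxy), Jp_of_nonneg hp hy]
    have h0 : y ^ (p-1) ≤ x ^ (p-1) := Real.rpow_le_rpow hy hxy (by linarith)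
    have h1 := rpow_lip hα hM hy hxy ((le_abs_self x).trans hxM)
    have h3 : p - 1 - 1 = p - 2 := by ring
    rw [h3] at h1
    constructor <;> linarith
  · rcases le_or_gt 0 x with hx | hx
    · have hJy : Jp p y = -((-y) ^ (p - 1)) := Jp_of_nonpos hp (by linarith)
      rw [Jp_of_nonneg hp hx, hJy]
      have h0 : (0:ℝ) ≤ x ^ (p-1) := Real.rpow_nonneg hx _
      have h0' : (0:ℝ) ≤ (-y) ^ (p-1) := Real.rpow_nonneg (by linarith) _
      -- x^{p-1} ≤ M^{p-2} x  and  (-y)^{p-1} ≤ M^{p-2} (-y)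
      have key : ∀ t : ℝ, 0 ≤ t → t ≤ M → t ^ (p-1) ≤ M ^ (p-2) * t := by
        intro t ht htM
        rcases eq_or_lt_of_le ht with h | h
        · rw [← h, Real.zero_rpow (by linarith : p - 1 ≠ 0), mul_zero]
        · have : t ^ (p-1) = t ^ (p-2) * t := by
            rw [← Real.rpow_add_one h.ne']; ring_nf
          rw [this]
          exact mul_le_mul_of_nonneg_right
            (Real.rpow_le_rpow ht htM (by linarith)) ht
      have h1 := key x hx ((le_abs_self x).trans hxM)
      have h2 := key (-y) (by linarith) ((neg_le_abs y).trans hyM)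
      have h4 : M ^ (p-2) * x + M ^ (p-2) * (-y) ≤ (p-1) * M ^ (p-2) * (x - y) := by
        have hM2 : (0:ℝ) ≤ M ^ (p-2) := Real.rpow_nonneg hM _
        nlinarith
      constructor <;> linarith
    · have hJx : Jp p x = -((-x) ^ (p - 1)) := Jp_of_nonpos hp (by linarith)
      have hJy : Jp p y = -((-y) ^ (p - 1)) := Jp_of_nonpos hp (by linarith)
      rw [hJx, hJy]
      have h0 : (-x) ^ (p-1) ≤ (-y) ^ (p-1) :=
        Real.rpow_le_rpow (by linarith) (by linarith) (by linarith)
      have h1 := rpow_lip hα hM (by linarith : (0:ℝ) ≤ -x) (by linarith : -x ≤ -y)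
        ((neg_le_abs y).trans hyM)
      have h3 : p - 1 - 1 = p - 2 := by ring
      have h4 : -y - -x = x - y := by ring
      rw [h3, h4] at h1
      constructor <;> linarith

lemma Jp_lip {p M x y : ℝ} (hp2 : 2 ≤ p) (hM : 0 ≤ M) (hxM : |x| ≤ M) (hyM : |y| ≤ M) :
    |Jp p x - Jp p y| ≤ (p - 1) * M ^ (p - 2) * |x - y| := by
  rcases le_total y x with h | h
  · obtain ⟨h0, h1⟩ := Jp_main_ge2 hp2 hM x y hxM hyM h
    rw [abs_of_nonneg h0, abs_of_nonneg (by linarith : (0:ℝ) ≤ x - y)]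
    exact h1
  · obtain ⟨h0, h1⟩ := Jp_main_ge2 hp2 hM y x hyM hxM h
    rw [abs_sub_comm, abs_of_nonneg h0, abs_sub_comm x y,
      abs_of_nonneg (by linarith : (0:ℝ) ≤ y - x)]
    exact h1

/-- Key pointwise bound. -/
lemma Jp_key {p : ℝ} (hp : 1 < p) (a b : ℝ) :
    |Jp p (a - b) + Jp p b| ≤
      (p + 1) * |a| ^ min 1 (p - 1) * (1 + |a| + |b|) ^ (p - 1) := by
  have hb : Jp p b = - Jp p (-b) := by rw [Jp_neg, neg_neg]
  have habs : Jp p (a - b) + Jp p b = Jp p (a - b) - Jp p (-b) := by rw [hb]; ring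
  rw [habs]
  have hS1 : (1:ℝ) ≤ 1 + |a| + |b| := by linarith [abs_nonneg a, abs_nonneg b]
  have hS : (1:ℝ) ≤ (1 + |a| + |b|) ^ (p - 1) :=
    Real.one_le_rpow hS1 (by linarith)
  rcases le_or_gt p 2 with h2 | h2
  · have hmin : min 1 (p - 1) = p - 1 := min_eq_right (by linarith)
    rw [hmin]
    have h1 := Jp_holder (x := a - b) (y := -b) hp h2
    have h3 : a - b - -b = a := by ring
    rw [h3] at h1
    have h4 : (0:ℝ) ≤ |a| ^ (p-1) := Real.rpow_nonneg (abs_nonneg _) _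
    calc |Jp p (a-b) - Jp p (-b)| ≤ 2 * |a| ^ (p-1) := h1
      _ ≤ (p + 1) * |a| ^ (p - 1) * (1 + |a| + |b|) ^ (p - 1) := by
          nlinarith [mul_le_mul_of_nonneg_left hS (by positivity : (0:ℝ) ≤ 2 * |a| ^ (p-1)),
            mul_nonneg (mul_nonneg (by linarith : (0:ℝ) ≤ p - 1) h4)
              (by positivity : (0:ℝ) ≤ (1 + |a| + |b|) ^ (p-1))]
  · have hmin : min 1 (p - 1) = 1 := min_eq_left (by linarith)
    rw [hmin, Real.rpow_one]
    set M := |a| + |b| with hMdef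
    have hM : 0 ≤ M := by positivity
    have h1 := Jp_lip (x := a - b) (y := -b) h2.le hM
      (by rw [hMdef]; simpa using abs_sub a b)
      (by rw [abs_neg, hMdef]; exact le_add_of_nonneg_left (abs_nonneg a))
    have h3 : a - b - -b = a := by ring
    rw [h3] at h1
    have h5 : M ^ (p-2) ≤ (1 + |a| + |b|) ^ (p-1) := by
      calc M ^ (p-2) ≤ (1 + |a| + |b|) ^ (p-2) :=
            Real.rpow_le_rpow hM (by rw [hMdef]; linarith) (by linarith)
        _ ≤ (1 + |a| + |b|) ^ (p-1) :=
            Real.rpow_le_rpow_of_exponent_le hS1 (by linarith)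
    calc |Jp p (a-b) - Jp p (-b)| ≤ (p - 1) * M ^ (p - 2) * |a| := h1
      _ ≤ (p + 1) * (1 + |a| + |b|) ^ (p-1) * |a| := by
          refine mul_le_mul_of_nonneg_right ?_ (abs_nonneg a)
          exact mul_le_mul (by linarith) h5 (Real.rpow_nonneg hM _) (by linarith)
      _ = (p + 1) * |a| * (1 + |a| + |b|) ^ (p-1) := by ring

set_option maxHeartbeats 2000000 in
/-- bound on `W_{2,1}`. If `u ∈ L^{p-1}_{sp}(ℝ^d)` is continuous on
`B_{R₀}(0)` and vanishes to infinite order at `0`, then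
`W_{2,1}(x,ε) = ∫_{B_{(k+1)ε}(0)^c} [J_p(u(x)-u(y)) + J_p(u(y))] |x-y|^{-d-sp} dy`
converges to zero of arbitrary order, uniformly for `x ∈ B_{kε}(0)`. -/
theorem W21_bound
    (d : ℕ) (hd : 1 ≤ d) (s p : ℝ) (hs : s ∈ Ioo (0 : ℝ) 1) (hp : 1 < p)
    (R₀ : ℝ) (hR₀ : R₀ ∈ Ioo (0 : ℝ) 1) (k : ℕ)
    (u : Ed d → ℝ) (hu : memTail d s p u)
    (hcont : ContinuousOn u (ball (0 : Ed d) R₀))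
    (hvan : ∀ n : ℕ, u =O[nhds (0 : Ed d)] fun x => ‖x‖ ^ n) :
    ∀ m : ℕ, ∃ C > (0 : ℝ), ∃ ε₁ > (0 : ℝ), ∀ ε ∈ Ioo (0 : ℝ) ε₁,
      ∀ x ∈ ball (0 : Ed d) (k * ε),
        |∫ y in (ball (0 : Ed d) ((k + 1) * ε))ᶜ,
            (Jp p (u x - u y) + Jp p (u y)) / ‖x - y‖ ^ ((d : ℝ) + s * p)|
          ≤ C * ε ^ m := by
  obtain ⟨hs0, hs1⟩ := hs
  obtain ⟨hmeas, hint⟩ := hu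
  intro m
  set r : ℝ := (d : ℝ) + s * p with hrdef
  have hsp : 0 < s * p := mul_pos hs0 (by linarith)
  have hr0 : 0 < r := by
    have : (0:ℝ) ≤ (d:ℝ) := Nat.cast_nonneg d
    linarith
  set q : ℝ := min 1 (p - 1) with hqdef
  have hq : 0 < q := lt_min one_pos (by linarith)
  have hq1 : q ≤ 1 := min_le_left _ _
  obtain ⟨n, hn⟩ : ∃ n : ℕ, (m : ℝ) + r ≤ n * q := by
    obtain ⟨n, hn⟩ := exists_nat_ge (((m : ℝ) + r) / q)
    exact ⟨n, by rwa [div_le_iff₀ hq] at hn⟩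
  obtain ⟨c, hc⟩ := (hvan n).bound
  rw [Metric.eventually_nhds_iff] at hc
  obtain ⟨δ, hδ0, hδ⟩ := hc
  set c' : ℝ := |c| + 1 with hc'def
  have hc'0 : 0 < c' := by positivity
  have hcc' : c ≤ c' := by
    have := le_abs_self c; linarith
  -- the integrable majorant
  set g : Ed d → ℝ := fun y => (1 + |u y| ^ (p - 1)) / (1 + ‖y‖) ^ r with hgdef
  have hgnonneg : ∀ y, 0 ≤ g y := by
    intro y
    have h1 : (0:ℝ) ≤ |u y| ^ (p-1) := Real.rpow_nonneg (abs_nonneg _) _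
    have h2 : (0:ℝ) < (1 + ‖y‖) ^ r :=
      Real.rpow_pos_of_pos (by positivity) _
    positivity
  have hg : Integrable g := by
    have hg1 : Integrable (fun y : Ed d => ((1 + ‖y‖) ^ r)⁻¹) := by
      have h := integrable_one_add_norm (E := Ed d) (μ := volume) (r := r)
        (by rw [finrank_euclideanSpace_fin]; linarith)
      have he : (fun y : Ed d => (1 + ‖y‖) ^ (-r)) = fun y : Ed d => ((1 + ‖y‖) ^ r)⁻¹ := by
        funext y
        rw [Real.rpow_neg (by positivity)]
      rwa [he] at h
    have : g = fun y => ((1 + ‖y‖) ^ r)⁻¹ + |u y| ^ (p - 1) / (1 + ‖y‖) ^ r := by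
      funext y
      show (1 + |u y| ^ (p - 1)) / (1 + ‖y‖) ^ r = _
      rw [add_div, one_div]
    rw [this]
    exact hg1.add hint
  set I₀ : ℝ := ∫ y, g y with hI₀def
  have hI₀ : 0 ≤ I₀ := integral_nonneg hgnonneg
  set C₀ : ℝ := (p + 1) * c' ^ q * ((k : ℝ) + 1) ^ ((n : ℝ) * q) * (1 + c') ^ (p - 1)
      * 2 ^ (p - 1) * (2 * ((k : ℝ) + 1)) ^ r with hC₀def
  have hC₀ : 0 < C₀ := by
    have h1 : (0:ℝ) < c' ^ q := Real.rpow_pos_of_pos hc'0 _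
    have h2 : (0:ℝ) < ((k : ℝ) + 1) ^ ((n : ℝ) * q) := Real.rpow_pos_of_pos (by positivity) _
    have h3 : (0:ℝ) < (1 + c') ^ (p - 1) := Real.rpow_pos_of_pos (by positivity) _
    have h4 : (0:ℝ) < (2:ℝ) ^ (p - 1) := Real.rpow_pos_of_pos (by positivity) _
    have h5 : (0:ℝ) < (2 * ((k : ℝ) + 1)) ^ r := Real.rpow_pos_of_pos (by positivity) _
    have hp1 : (0:ℝ) < p + 1 := by linarith
    positivity
  refine ⟨C₀ * (I₀ + 1), by positivity, min δ 1 / ((k : ℝ) + 1), by positivity, ?_⟩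
  rintro ε ⟨hε0, hε1⟩ x hx
  have hk1 : (0:ℝ) < (k : ℝ) + 1 := by positivity
  have hkε : ((k : ℝ) + 1) * ε < min δ 1 := by
    rw [div_eq_mul_inv] at hε1
    calc ((k : ℝ) + 1) * ε < ((k : ℝ) + 1) * (min δ 1 * ((k : ℝ) + 1)⁻¹) := by
          exact mul_lt_mul_of_pos_left hε1 hk1
      _ = min δ 1 := by field_simp
  have hkεδ : ((k : ℝ) + 1) * ε < δ := hkε.trans_le (min_le_left _ _)
  have hkε1 : ((k : ℝ) + 1) * ε ≤ 1 := (hkε.trans_le (min_le_right _ _)).le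
  have hε₁1 : ε ≤ 1 := by nlinarith [Nat.cast_nonneg (α := ℝ) k]
  rw [mem_ball_zero_iff] at hx
  have hxk : ‖x‖ < (k : ℝ) * ε := hx
  have hxkε : ‖x‖ ≤ ((k : ℝ) + 1) * ε :=
    hxk.le.trans (mul_le_mul_of_nonneg_right (by linarith) hε0.le)
  -- bound on |u x|
  have hux : |u x| ≤ c' * (((k : ℝ) + 1) * ε) ^ n := by
    have hxδ : dist x 0 < δ := by
      rw [dist_zero_right]
      calc ‖x‖ < (k : ℝ) * ε := hxk
        _ ≤ ((k : ℝ) + 1) * ε := mul_le_mul_of_nonneg_right (by linarith) hε0.le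
        _ < δ := hkεδ
    have h1 := hδ hxδ
    have h2n : ‖‖x‖ ^ n‖ = ‖x‖ ^ n := by
      rw [Real.norm_eq_abs, abs_of_nonneg (pow_nonneg (norm_nonneg x) n)]
    rw [h2n, Real.norm_eq_abs] at h1
    calc |u x| ≤ c * ‖x‖ ^ n := h1
      _ ≤ c' * ‖x‖ ^ n := mul_le_mul_of_nonneg_right hcc' (by positivity)
      _ ≤ c' * (((k : ℝ) + 1) * ε) ^ n := by
          exact mul_le_mul_of_nonneg_left (pow_le_pow_left₀ (norm_nonneg x) hxkε n) hc'0.le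
  have hux1 : |u x| ≤ c' := by
    calc |u x| ≤ c' * (((k : ℝ) + 1) * ε) ^ n := hux
      _ ≤ c' * 1 := by
          exact mul_le_mul_of_nonneg_left (pow_le_one₀ (by positivity) hkε1) hc'0.le
      _ = c' := mul_one c'
  -- the scalar factor
  set D : ℝ := C₀ * ε ^ ((n : ℝ) * q - r) with hDdef
  have hεnr : (0:ℝ) < ε ^ ((n : ℝ) * q - r) := Real.rpow_pos_of_pos hε0 _
  have hD : 0 ≤ D := by positivity
  -- pointwise bound
  have hkey : ∀ y ∈ (ball (0 : Ed d) (((k : ℝ) + 1) * ε))ᶜ,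
      |(Jp p (u x - u y) + Jp p (u y)) / ‖x - y‖ ^ r| ≤ D * g y := by
    intro y hy
    rw [mem_compl_iff, mem_ball, not_lt, dist_zero_right] at hy
    -- geometric bounds
    have hA : ε ≤ ‖x - y‖ := by
      have h1 : ‖y‖ - ‖x‖ ≤ ‖x - y‖ := by
        rw [norm_sub_rev]; exact norm_sub_norm_le y x
      linarith
    have hNpos : (0:ℝ) < ‖x - y‖ := lt_of_lt_of_le hε0 hA
    have hB : ‖y‖ ≤ ((k : ℝ) + 1) * ‖x - y‖ := by
      have h1 : ‖y‖ - ‖x‖ ≤ ‖x - y‖ := by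
        rw [norm_sub_rev]; exact norm_sub_norm_le y x
      have e1 : ((k:ℝ)) * (((k:ℝ) + 1) * ε) ≤ (k:ℝ) * ‖y‖ :=
        mul_le_mul_of_nonneg_left hy (Nat.cast_nonneg k)
      have e2 : ((k:ℝ) + 1) * ‖x‖ ≤ ((k:ℝ) + 1) * ((k:ℝ) * ε) :=
        mul_le_mul_of_nonneg_left hxk.le hk1.le
      have e3 : ((k:ℝ) + 1) * (‖y‖ - ‖x‖) ≤ ((k:ℝ) + 1) * ‖x - y‖ :=
        mul_le_mul_of_nonneg_left h1 hk1.le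
      linarith [e1, e2, e3]
    have hd1 : ε * (1 + ‖y‖) ≤ (2 * ((k : ℝ) + 1)) * ‖x - y‖ := by
      have hεy : ε * ‖y‖ ≤ ‖y‖ := mul_le_of_le_one_left (norm_nonneg y) hε₁1
      have e4 : (0:ℝ) ≤ (k:ℝ) * ‖x - y‖ := by positivity
      linarith [hεy, hA, hB, e4]
    set P : ℝ := (1 + ‖y‖) ^ r with hPdef
    have hPpos : (0:ℝ) < P := Real.rpow_pos_of_pos (by positivity) _
    set N : ℝ := ‖x - y‖ ^ r with hNdef
    have hNrpos : (0:ℝ) < N := Real.rpow_pos_of_pos hNpos _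
    have hE : ε ^ r * P ≤ (2 * ((k : ℝ) + 1)) ^ r * N := by
      have := Real.rpow_le_rpow (by positivity) hd1 hr0.le
      rwa [Real.mul_rpow hε0.le (by positivity), Real.mul_rpow (by positivity) hNpos.le]
        at this
    -- numerator bound
    have huy : (0:ℝ) ≤ |u y| ^ (p - 1) := Real.rpow_nonneg (abs_nonneg _) _
    have hnum : |Jp p (u x - u y) + Jp p (u y)| ≤
        (p + 1) * (c' ^ q * (((k : ℝ) + 1) ^ ((n : ℝ) * q) * ε ^ ((n : ℝ) * q)))
          * ((1 + c') ^ (p - 1) * (2 ^ (p - 1) * (1 + |u y| ^ (p - 1)))) := by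
      have h1 := Jp_key hp (u x) (u y)
      have h2 : |u x| ^ q ≤ c' ^ q * (((k : ℝ) + 1) ^ ((n : ℝ) * q) * ε ^ ((n : ℝ) * q)) := by
        calc |u x| ^ q ≤ (c' * (((k : ℝ) + 1) * ε) ^ n) ^ q :=
              Real.rpow_le_rpow (abs_nonneg _) hux hq.le
          _ = c' ^ q * (((k : ℝ) + 1) * ε) ^ ((n : ℝ) * q) := by
              rw [Real.mul_rpow hc'0.le (by positivity),
                Real.rpow_natCast_mul (by positivity : (0:ℝ) ≤ ((k : ℝ) + 1) * ε)]
          _ = c' ^ q * (((k : ℝ) + 1) ^ ((n : ℝ) * q) * ε ^ ((n : ℝ) * q)) := by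
              rw [Real.mul_rpow (by positivity : (0:ℝ) ≤ (k : ℝ) + 1) hε0.le]
      have h3 : (1 + |u x| + |u y|) ^ (p - 1) ≤
          (1 + c') ^ (p - 1) * (2 ^ (p - 1) * (1 + |u y| ^ (p - 1))) := by
        have h4 : (1 + |u x| + |u y|) ^ (p - 1) ≤ ((1 + c') * (1 + |u y|)) ^ (p - 1) := by
          apply Real.rpow_le_rpow (by positivity) _ (by linarith)
          linarith [hux1, abs_nonneg (u y), mul_nonneg hc'0.le (abs_nonneg (u y))]
        have h5 : ((1 + c') * (1 + |u y|)) ^ (p - 1)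
            = (1 + c') ^ (p - 1) * (1 + |u y|) ^ (p - 1) :=
          Real.mul_rpow (by positivity) (by positivity)
        have h6 : (1 + |u y|) ^ (p - 1) ≤ 2 ^ (p - 1) * (1 + |u y| ^ (p - 1)) := by
          rcases le_total (|u y|) 1 with h | h
          · calc (1 + |u y|) ^ (p - 1) ≤ (2:ℝ) ^ (p - 1) :=
                  Real.rpow_le_rpow (by positivity) (by linarith) (by linarith)
              _ = 2 ^ (p - 1) * 1 := (mul_one _).symm
              _ ≤ 2 ^ (p - 1) * (1 + |u y| ^ (p - 1)) := by
                  apply mul_le_mul_of_nonneg_left (by linarith)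
                    (Real.rpow_nonneg (by norm_num) _)
          · calc (1 + |u y|) ^ (p - 1) ≤ (2 * |u y|) ^ (p - 1) :=
                  Real.rpow_le_rpow (by positivity) (by linarith) (by linarith)
              _ = 2 ^ (p - 1) * |u y| ^ (p - 1) :=
                  Real.mul_rpow (by norm_num) (abs_nonneg _)
              _ ≤ 2 ^ (p - 1) * (1 + |u y| ^ (p - 1)) := by
                  apply mul_le_mul_of_nonneg_left (by linarith)
                    (Real.rpow_nonneg (by norm_num) _)
        calc (1 + |u x| + |u y|) ^ (p - 1) ≤ (1 + c') ^ (p - 1) * (1 + |u y|) ^ (p - 1) :=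
              h4.trans_eq h5
          _ ≤ (1 + c') ^ (p - 1) * (2 ^ (p - 1) * (1 + |u y| ^ (p - 1))) :=
              mul_le_mul_of_nonneg_left h6 (Real.rpow_nonneg (by positivity) _)
      calc |Jp p (u x - u y) + Jp p (u y)|
          ≤ (p + 1) * |u x| ^ q * (1 + |u x| + |u y|) ^ (p - 1) := h1
        _ ≤ (p + 1) * (c' ^ q * (((k : ℝ) + 1) ^ ((n : ℝ) * q) * ε ^ ((n : ℝ) * q)))
            * ((1 + c') ^ (p - 1) * (2 ^ (p - 1) * (1 + |u y| ^ (p - 1)))) := by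
            apply mul_le_mul
            · exact mul_le_mul_of_nonneg_left h2 (by linarith)
            · exact h3
            · exact Real.rpow_nonneg (by positivity) _
            · have : (0:ℝ) ≤ |u x| ^ q := Real.rpow_nonneg (abs_nonneg _) _
              positivity
    -- combine
    set B : ℝ := (p + 1) * (c' ^ q * (((k : ℝ) + 1) ^ ((n : ℝ) * q) * ε ^ ((n : ℝ) * q)))
          * ((1 + c') ^ (p - 1) * (2 ^ (p - 1) * (1 + |u y| ^ (p - 1)))) with hBdef
    have hB0 : 0 ≤ B := le_trans (abs_nonneg _) hnum
    have hN₀pos : (0:ℝ) < ε ^ r * P / (2 * ((k : ℝ) + 1)) ^ r := by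
      have := Real.rpow_pos_of_pos hε0 r
      have h2 : (0:ℝ) < (2 * ((k : ℝ) + 1)) ^ r := Real.rpow_pos_of_pos (by positivity) _
      positivity
    have hNN : ε ^ r * P / (2 * ((k : ℝ) + 1)) ^ r ≤ N := by
      rw [div_le_iff₀ (Real.rpow_pos_of_pos (by positivity : (0:ℝ) < 2 * ((k : ℝ) + 1)) r)]
      linarith
    have hfinal : |(Jp p (u x - u y) + Jp p (u y)) / ‖x - y‖ ^ r|
        ≤ B / (ε ^ r * P / (2 * ((k : ℝ) + 1)) ^ r) := by
      rw [abs_div, abs_of_pos hNrpos]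
      exact div_le_div₀ hB0 hnum hN₀pos hNN
    refine hfinal.trans (le_of_eq ?_)
    rw [hBdef, hDdef, hC₀def, hgdef]
    have hεr : ε ^ ((n : ℝ) * q - r) = ε ^ ((n : ℝ) * q) / ε ^ r := Real.rpow_sub hε0 _ _
    rw [hεr]
    have hεrpos : (0:ℝ) < ε ^ r := Real.rpow_pos_of_pos hε0 _
    have h2k : (0:ℝ) < (2 * ((k : ℝ) + 1)) ^ r := Real.rpow_pos_of_pos (by positivity) _
    field_simp
    ring
  -- integral estimate
  have hSmeas : MeasurableSet ((ball (0 : Ed d) (((k : ℝ) + 1) * ε))ᶜ) :=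
    measurableSet_ball.compl
  have step1 : |∫ y in (ball (0 : Ed d) (((k : ℝ) + 1) * ε))ᶜ,
      (Jp p (u x - u y) + Jp p (u y)) / ‖x - y‖ ^ r|
      ≤ ∫ y in (ball (0 : Ed d) (((k : ℝ) + 1) * ε))ᶜ,
        |(Jp p (u x - u y) + Jp p (u y)) / ‖x - y‖ ^ r| := by
    rw [← Real.norm_eq_abs]
    refine (norm_integral_le_integral_norm _).trans (le_of_eq ?_)
    simp only [Real.norm_eq_abs]
  have step2 : ∫ y in (ball (0 : Ed d) (((k : ℝ) + 1) * ε))ᶜ,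
        |(Jp p (u x - u y) + Jp p (u y)) / ‖x - y‖ ^ r|
      ≤ ∫ y in (ball (0 : Ed d) (((k : ℝ) + 1) * ε))ᶜ, D * g y := by
    apply integral_mono_of_nonneg
    · exact Eventually.of_forall fun y => abs_nonneg _
    · exact (hg.const_mul D).restrict
    · exact (ae_restrict_mem hSmeas).mono hkey
  have step3 : ∫ y in (ball (0 : Ed d) (((k : ℝ) + 1) * ε))ᶜ, D * g y
      ≤ D * I₀ := by
    rw [integral_const_mul]
    exact mul_le_mul_of_nonneg_left
      (setIntegral_le_integral hg (Eventually.of_forall hgnonneg)) hD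
  have step4 : D * I₀ ≤ C₀ * (I₀ + 1) * ε ^ m := by
    have hεm : ε ^ ((n : ℝ) * q - r) ≤ ε ^ (m : ℝ) :=
      Real.rpow_le_rpow_of_exponent_ge hε0 hε₁1 (by linarith)
    rw [Real.rpow_natCast] at hεm
    have hεmpos : (0:ℝ) < ε ^ m := by positivity
    calc D * I₀ = C₀ * ε ^ ((n : ℝ) * q - r) * I₀ := by rw [hDdef]
      _ ≤ C₀ * ε ^ m * I₀ := by
          apply mul_le_mul_of_nonneg_right _ hI₀
          exact mul_le_mul_of_nonneg_left hεm hC₀.le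
      _ ≤ C₀ * (I₀ + 1) * ε ^ m := by linarith [mul_pos hC₀ hεmpos]
  calc |∫ y in (ball (0 : Ed d) (((k:ℝ) + 1) * ε))ᶜ,
        (Jp p (u x - u y) + Jp p (u y)) / ‖x - y‖ ^ r|
      ≤ ∫ y in (ball (0 : Ed d) (((k:ℝ) + 1) * ε))ᶜ,
        |(Jp p (u x - u y) + Jp p (u y)) / ‖x - y‖ ^ r| := step1
    _ ≤ ∫ y in (ball (0 : Ed d) (((k:ℝ) + 1) * ε))ᶜ, D * g y := step2
    _ ≤ D * I₀ := step3
    _ ≤ C₀ * (I₀ + 1) * ε ^ m := step4
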